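/- In the unweighted case p_{ij} = 1/2 for all i ≠ j, for each label i ∈ {1,…,n} define the function f_i on permutations by f_i(x) := cos((2·pos_i(x) − 1)π/(2n)), where pos_i(x) is the position r with x_r = i. Then f_i, viewed as a vector indexed by permutations, satisfies K f_i = (1 − (1 − cos(π/n))/(n − 1)) f_i; that is, f_i is an eigenvector of K with eigenvalue 1 − (1 − cos(π/n))/(n − 1). -/

import Mathlib

/-!
Only the position `k = x⁻¹ i` of the label `i` matters: the swap of positions `r - 1, r` moves
it to `k - 1` if `r = k`, to `k + 1` if `r = k + 1`, and fixes it otherwise, each move having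
probability `1 / (2 (n - 1))`. So `K` acts on `f_i` as a lazy walk on the path `{0, …, n - 1}`,
and it suffices that `k ↦ cos ((2k + 1)π / (2n))` is an eigenfunction of the path Laplacian
with eigenvalue `2 cos (π / n) - 2`. In the interior this is `cos (a - h) + cos (a + h) =
2 cos h cos a`; at the two ends the missing neighbour does no harm because the profile is
symmetric about `k = -1/2` and `k = n - 1/2`.
-/

open Finset

/-- Off-diagonal entries of the adjacent-transposition chain: `Koff n p x y = p_{ji}/(n-1)`
if `y` is obtained from `x` by swapping the entries in (0-based) positions `r-1` and `r`
for some `1 ≤ r ≤ n-1`, and `0` otherwise. Here `x r` is the entry in position `r`. -/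
noncomputable def Koff (n : ℕ) (p : Fin n → Fin n → ℝ)
    (x y : Equiv.Perm (Fin n)) : ℝ :=
  ∑ r : Fin n,
    if 1 ≤ (r : ℕ) ∧
        y = x * Equiv.swap (⟨(r : ℕ) - 1, Nat.lt_of_le_of_lt (Nat.sub_le _ _) r.isLt⟩ : Fin n) r
    then p (x r) (x ⟨(r : ℕ) - 1, Nat.lt_of_le_of_lt (Nat.sub_le _ _) r.isLt⟩) / ((n : ℝ) - 1)
    else 0

/-- The transition matrix `K` of the adjacent-transposition chain on permutations. -/
noncomputable def Kmat (n : ℕ) (p : Fin n → Fin n → ℝ) :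
    Matrix (Equiv.Perm (Fin n)) (Equiv.Perm (Fin n)) ℝ :=
  Matrix.of fun x y =>
    if x = y then 1 - ∑ z ∈ Finset.univ.erase x, Koff n p x z
    else Koff n p x y

/-- Unnormalized stationary weight `∏_{r<s} p_{x_r,x_s}`. -/
noncomputable def piUn (n : ℕ) (p : Fin n → Fin n → ℝ) (x : Equiv.Perm (Fin n)) : ℝ :=
  ∏ rs ∈ Finset.univ.filter (fun rs : Fin n × Fin n => rs.1 < rs.2), p (x rs.1) (x rs.2)

/-- The stationary distribution `π`. -/
noncomputable def piDist (n : ℕ) (p : Fin n → Fin n → ℝ) (x : Equiv.Perm (Fin n)) : ℝ :=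
  (∑ y : Equiv.Perm (Fin n), piUn n p y)⁻¹ * piUn n p x

/-- The function `f_i` on permutations: `f_i(x) = cos((2·pos_i(x) - 1)π/(2n))`, where
`pos_i(x) ∈ {1, ..., n}` is the (1-based) position of label `i` in `x`. -/
noncomputable def fvec (n : ℕ) (i : Fin n) (x : Equiv.Perm (Fin n)) : ℝ :=
  Real.cos ((2 * (((x.symm i : ℕ) + 1 : ℕ) : ℝ) - 1) * Real.pi / (2 * n))

open Real Equiv

noncomputable def chebyshevNode (n : ℕ) (t : ℝ) : ℝ :=
  cos ((2 * t + 1) * π / (2 * n))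

section ChebyshevNode

variable {n : ℕ}

theorem chebyshevNode_sub_one_add_add_one (t : ℝ) :
    chebyshevNode n (t - 1) + chebyshevNode n (t + 1) = 2 * cos (π / n) * chebyshevNode n t := by
  have hsum : ((2 * (t - 1) + 1) * π / (2 * n) + (2 * (t + 1) + 1) * π / (2 * n)) / 2
      = (2 * t + 1) * π / (2 * n) := by ring
  have hdiff : ((2 * (t - 1) + 1) * π / (2 * n) - (2 * (t + 1) + 1) * π / (2 * n)) / 2
      = -(π / n) := by ring
  rw [chebyshevNode, chebyshevNode, chebyshevNode, cos_add_cos, hsum, hdiff, cos_neg]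
  ring

theorem chebyshevNode_neg_one : chebyshevNode n (-1) = chebyshevNode n 0 := by
  norm_num [chebyshevNode, neg_div]

theorem chebyshevNode_natCast (hn : n ≠ 0) : chebyshevNode n n = chebyshevNode n (n - 1) := by
  have h : (2 * ((n : ℝ) - 1) + 1) * π / (2 * n) = 2 * π - (2 * n + 1) * π / (2 * n) := by
    field_simp; ring
  rw [chebyshevNode, chebyshevNode, h, cos_two_pi_sub]

theorem chebyshevNode_neumann_laplacian {k : ℕ} (hk : k < n) :
    ((if 1 ≤ k then chebyshevNode n (k - 1 : ℕ) - chebyshevNode n k else 0) +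
        if k + 1 < n then chebyshevNode n (k + 1 : ℕ) - chebyshevNode n k else 0) =
      (2 * cos (π / n) - 2) * chebyshevNode n k := by
  have hleft : (if 1 ≤ k then chebyshevNode n (k - 1 : ℕ) - chebyshevNode n k else 0) =
      chebyshevNode n (k - 1) - chebyshevNode n k := by
    split_ifs with h
    · rw [Nat.cast_sub h, Nat.cast_one]
    · obtain rfl : k = 0 := by omega
      rw [Nat.cast_zero, zero_sub, chebyshevNode_neg_one, sub_self]
  have hright : (if k + 1 < n then chebyshevNode n (k + 1 : ℕ) - chebyshevNode n k else 0) =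
      chebyshevNode n (k + 1) - chebyshevNode n k := by
    split_ifs with h
    · rw [Nat.cast_succ]
    · obtain rfl : n = k + 1 := by omega
      rw [← Nat.cast_succ, chebyshevNode_natCast k.succ_ne_zero, Nat.cast_succ,
        add_sub_cancel_right, sub_self]
  rw [hleft, hright]
  linarith [chebyshevNode_sub_one_add_add_one (n := n) k]

end ChebyshevNode

section AdjacentSwap

variable {n : ℕ} {M : Type*} [AddCommGroup M]

def prevPos (r : Fin n) : Fin n :=
  ⟨(r : ℕ) - 1, Nat.lt_of_le_of_lt (Nat.sub_le _ _) r.isLt⟩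

@[simp] theorem val_prevPos (r : Fin n) : (prevPos r : ℕ) = r - 1 := rfl

theorem swap_prevPos_apply_sub (h : ℕ → M) (r k : Fin n) :
    (if 1 ≤ (r : ℕ) then h (swap (prevPos r) r k) - h k else 0) =
      (if (r : ℕ) = k ∧ 1 ≤ (k : ℕ) then h (k - 1) - h k else 0) +
        (if (r : ℕ) = k + 1 then h (k + 1) - h k else 0) := by
  by_cases hr : r = k
  · subst hr
    simp
  by_cases hkr : (r : ℕ) = k + 1
  · have hk : swap (prevPos r) r k = r := by
      rw [show k = prevPos r from Fin.ext (by rw [val_prevPos]; omega), swap_apply_left]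
    simp [hk, hkr]
  · have hk : swap (prevPos r) r k = k :=
      swap_apply_of_ne_of_ne (fun h => hr (Fin.ext (by rw [Fin.ext_iff, val_prevPos] at h; omega)))
        (Ne.symm hr)
    simp [hk, hkr, Fin.val_eq_val, hr]

theorem sum_swap_prevPos_apply_sub (h : ℕ → M) (k : Fin n) :
    ∑ r : Fin n, (if 1 ≤ (r : ℕ) then h (swap (prevPos r) r k) - h k else 0) =
      (if 1 ≤ (k : ℕ) then h (k - 1) - h k else 0) +
        (if (k : ℕ) + 1 < n then h (k + 1) - h k else 0) := by
  simp only [swap_prevPos_apply_sub, Finset.sum_add_distrib]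
  rw [Fin.sum_univ_eq_sum_range (fun r => if r = k ∧ 1 ≤ (k : ℕ) then h (k - 1) - h k else 0),
    Fin.sum_univ_eq_sum_range (fun r => if r = k + 1 then h (k + 1) - h k else 0)]
  simp [ite_and, k.isLt]

end AdjacentSwap

theorem mulVec_of_one_sub_sum_erase_apply {ι R : Type*} [Fintype ι] [DecidableEq ι] [CommRing R]
    (A : ι → ι → R) (f : ι → R) (x : ι) :
    (Matrix.of fun x y => if x = y then 1 - ∑ z ∈ univ.erase x, A x z else A x y).mulVec f x =
      f x + ∑ y, A x y * (f y - f x) := by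
  rw [Matrix.mulVec, dotProduct, ← add_sum_erase _ _ (mem_univ x),
    ← sum_erase univ (f := fun y => A x y * (f y - f x)) (a := x) (by simp)]
  simp only [Matrix.of_apply, ite_mul, ↓reduceIte]
  rw [sum_ite_of_false fun y hy => (ne_of_mem_erase hy).symm]
  simp only [mul_sub, sum_sub_distrib, ← sum_mul]
  ring

theorem sum_Koff_mul (n : ℕ) (p : Fin n → Fin n → ℝ) (x : Perm (Fin n))
    (g : Perm (Fin n) → ℝ) :
    ∑ y, Koff n p x y * g y =
      ∑ r : Fin n, if 1 ≤ (r : ℕ) then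
        p (x r) (x (prevPos r)) / ((n : ℝ) - 1) * g (x * swap (prevPos r) r) else 0 := by
  simp only [Koff, sum_mul]
  rw [sum_comm]
  refine sum_congr rfl fun r _ => ?_
  split_ifs with hr
  · simp only [hr, true_and, ite_zero_mul, sum_ite_eq', mem_univ, if_true]
    rfl
  · simp [hr]

theorem fvec_eq_chebyshevNode (n : ℕ) (i : Fin n) (x : Perm (Fin n)) :
    fvec n i x = chebyshevNode n (x.symm i : ℕ) := by
  rw [fvec, chebyshevNode]
  push_cast
  ring_nf

theorem fvec_eigenvector_general (n : ℕ) (p : Fin n → Fin n → ℝ)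
    (hp : ∀ i j : Fin n, i ≠ j → p i j = 1 / 2) (i : Fin n) :
    (Kmat n p).mulVec (fvec n i) =
      (1 - (1 - Real.cos (Real.pi / n)) / ((n : ℝ) - 1)) • fvec n i := by
  funext x
  set k := x.symm i
  have hp_adj : ∀ r : Fin n, 1 ≤ (r : ℕ) → p (x r) (x (prevPos r)) = 1 / 2 := fun r hr =>
    hp _ _ (x.injective.ne (Fin.ne_of_val_ne (by simp only [val_prevPos]; omega)))
  have hf_swap : ∀ r : Fin n,
      fvec n i (x * swap (prevPos r) r) = chebyshevNode n (swap (prevPos r) r k : ℕ) := by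
    intro r
    rw [fvec_eq_chebyshevNode, Perm.mul_def, symm_trans_apply, symm_swap]
  calc (Kmat n p).mulVec (fvec n i) x
      = fvec n i x + ∑ y, Koff n p x y * (fvec n i y - fvec n i x) :=
        mulVec_of_one_sub_sum_erase_apply _ _ _
    _ = chebyshevNode n k + 1 / 2 / ((n : ℝ) - 1) * ∑ r : Fin n,
          if 1 ≤ (r : ℕ) then chebyshevNode n (swap (prevPos r) r k : ℕ) - chebyshevNode n k
          else 0 := by
        rw [sum_Koff_mul, mul_sum, fvec_eq_chebyshevNode]
        refine congrArg _ (sum_congr rfl fun r _ => ?_)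
        split_ifs with hr
        · rw [hp_adj r hr, hf_swap]
        · rw [mul_zero]
    _ = chebyshevNode n k +
          1 / 2 / ((n : ℝ) - 1) * ((2 * cos (π / n) - 2) * chebyshevNode n k) := by
        rw [sum_swap_prevPos_apply_sub (fun m => chebyshevNode n m),
          chebyshevNode_neumann_laplacian k.isLt]
    _ = _ := by
        rw [Pi.smul_apply, smul_eq_mul, fvec_eq_chebyshevNode]
        ring

/-- in the unweighted case, `f_i` is an eigenvector of `K` with eigenvalue
`1 - (1 - cos(π/n))/(n-1)`. -/
theorem fvec_eigenvector (n : ℕ) (hn : 2 ≤ n) (p : Fin n → Fin n → ℝ)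
    (hp : ∀ i j : Fin n, i ≠ j → p i j = 1 / 2) (i : Fin n) :
    (Kmat n p).mulVec (fvec n i) =
      (1 - (1 - Real.cos (Real.pi / n)) / ((n : ℝ) - 1)) • fvec n i :=
  fvec_eigenvector_general n p hp i
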